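/- Let G be a group and r₀, r₁, r₂ ∈ G with r₀² = r₁² = r₂² = 1 and (r₀r₂)² = 1. Fix an integer j ≥ 1 and set α = r₀·r₁·(r₂r₁)^{j−1}. If α commutes with r₂, then (r₁r₂)^{2j} = 1. -/
import Mathlib

private lemma aux_pow_mul {G : Type*} [Group G] (a b : G) (n : ℕ) :
    (a * b) ^ (n + 1) = a * (b * a) ^ n * b := by
  induction n with
  | zero => simp
  | succ n ih =>
    rw [pow_succ, ih, pow_succ]
    group

/-- If `r₀, r₁, r₂` are involutions with `r₀` and `r₂` commuting, and
`α = r₀ * r₁ * (r₂ * r₁) ^ (j - 1)` commutes with `r₂`, then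
`(r₁ * r₂) ^ (2 * j) = 1`. -/
theorem r1r2_pow_two_j_eq_one_of_commutes_r2 {G : Type*} [Group G]
    (r₀ r₁ r₂ : G)
    (h0 : r₀ ^ 2 = 1) (h1 : r₁ ^ 2 = 1) (h2 : r₂ ^ 2 = 1)
    (h02 : (r₀ * r₂) ^ 2 = 1) (j : ℕ) (hj : 1 ≤ j)
    (α : G) (hα : α = r₀ * r₁ * (r₂ * r₁) ^ (j - 1))
    (hcomm : α * r₂ = r₂ * α) :
    (r₁ * r₂) ^ (2 * j) = 1 := by
  obtain ⟨k, rfl⟩ : ∃ k, j = k + 1 := ⟨j - 1, (Nat.succ_pred_eq_of_pos hj).symm⟩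
  have h0' : r₀⁻¹ = r₀ := inv_eq_of_mul_eq_one_left (by rw [← sq, h0])
  have h1' : r₁⁻¹ = r₁ := inv_eq_of_mul_eq_one_left (by rw [← sq, h1])
  have h2' : r₂⁻¹ = r₂ := inv_eq_of_mul_eq_one_left (by rw [← sq, h2])
  have hc : r₂ * r₀ = r₀ * r₂ := by
    have := inv_eq_of_mul_eq_one_left (by rw [← sq, h02] : (r₀ * r₂) * (r₀ * r₂) = 1)
    rw [mul_inv_rev, h0', h2'] at this
    exact this
  subst hα
  simp only [Nat.add_sub_cancel] at hcomm
  have key : (r₁ * r₂) ^ (k + 1) = (r₂ * r₁) ^ (k + 1) := by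
    have l1 : r₀ * r₁ * (r₂ * r₁) ^ k * r₂ = r₀ * (r₁ * r₂) ^ (k + 1) := by
      rw [aux_pow_mul]; group
    have l2 : r₂ * (r₀ * r₁ * (r₂ * r₁) ^ k) = r₀ * (r₂ * r₁) ^ (k + 1) := by
      rw [pow_succ']
      calc r₂ * (r₀ * r₁ * (r₂ * r₁) ^ k) = (r₂ * r₀) * (r₁ * (r₂ * r₁) ^ k) := by group
      _ = (r₀ * r₂) * (r₁ * (r₂ * r₁) ^ k) := by rw [hc]
      _ = r₀ * (r₂ * r₁ * (r₂ * r₁) ^ k) := by rw [mul_assoc r₀ r₂, ← mul_assoc r₂ r₁]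
    rw [l1, l2] at hcomm
    exact mul_left_cancel hcomm
  have hinv : ((r₁ * r₂) ^ (k + 1))⁻¹ = (r₂ * r₁) ^ (k + 1) := by
    rw [← inv_pow, mul_inv_rev, h1', h2']
  rw [two_mul, pow_add]
  nth_rewrite 2 [key]
  rw [← hinv, mul_inv_cancel]
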